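/- Let F be a finite field, c′ ≥ 2, and let S ∈ F be a secret shared by a uniformly random polynomial f(X) = S + a_1 X + … + a_{c′−1} X^{c′−1} with a_1,…,a_{c′−1} chosen independently and uniformly from F. Then for any set of at most c′−1 distinct nonzero evaluation points, the joint distribution of the shares (f(x_i)) at those points is independent of the secret S (i.e., uniform on F^{c′−1} when exactly c′−1 points are used). -/

import Mathlib

/-!
Shifting the coefficient vector `a` by a fixed `d` adds `∑ j, d j * x i ^ (j + 1)` to every share, so
it suffices that this linear map `F^{c'-1} → F^t` is onto: then the share counts for the secrets `S`
and `S'` are cardinalities of two fibres of one additive map, which are equal. Surjectivity comes from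
Lagrange interpolation: for targets `r`, interpolate `r i / x i` at the `t ≤ c' - 1` nodes by `q` of
degree `< c' - 1`; then `X * q` has no constant term and takes the value `r i` at `x i`.
-/

open Polynomial

def sharesOfZero {R : Type*} [CommRing R] (n : ℕ) {t : ℕ} (x : Fin t → R) :
    (Fin n → R) →ₗ[R] (Fin t → R) where
  toFun a i := ∑ j, a j * x i ^ ((j : ℕ) + 1)
  map_add' a b := by ext i; simp only [Pi.add_apply, add_mul, Finset.sum_add_distrib]
  map_smul' c a := by ext i; simp only [Pi.smul_apply, smul_eq_mul, Finset.mul_sum, mul_assoc,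
    RingHom.id_apply]

lemma sum_coeff_mul_pow_succ {R : Type*} [CommRing R] {n : ℕ} {q : R[X]} (hq : q.degree < n)
    (z : R) : ∑ j : Fin n, q.coeff j * z ^ ((j : ℕ) + 1) = z * q.eval z := by
  rw [eval_eq_sum, ← sum_fin (fun e a => a * z ^ e) (fun _ => zero_mul _) hq, Finset.mul_sum]
  exact Finset.sum_congr rfl fun j _ => by ring

lemma sharesOfZero_surjective {F : Type*} [Field F] {n t : ℕ} (ht : t ≤ n) {x : Fin t → F}
    (hx : Function.Injective x) (hx0 : ∀ i, x i ≠ 0) :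
    Function.Surjective (sharesOfZero n x) := by
  intro r
  set q := Lagrange.interpolate Finset.univ x fun i => r i / x i
  have hq : q.degree < n := by
    refine (Lagrange.degree_interpolate_lt _ hx.injOn).trans_le ?_
    simpa using ht
  refine ⟨fun j => q.coeff j, funext fun i => ?_⟩
  change ∑ j : Fin n, q.coeff j * x i ^ ((j : ℕ) + 1) = r i
  rw [sum_coeff_mul_pow_succ hq, Lagrange.eval_interpolate_at_node _ hx.injOn (Finset.mem_univ i),
    mul_div_cancel₀ _ (hx0 i)]

open scoped Classical in
theorem stmt3_general {F : Type*} [Field F] [Fintype F] (c' : ℕ)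
    (t : ℕ) (ht : t ≤ c' - 1) (x : Fin t → F)
    (hx : Function.Injective x) (hx0 : ∀ i, x i ≠ 0) (S S' : F) (y : Fin t → F) :
    (Finset.univ.filter fun a : Fin (c' - 1) → F =>
        ∀ i, S + ∑ j, a j * (x i) ^ ((j : ℕ) + 1) = y i).card =
    (Finset.univ.filter fun a : Fin (c' - 1) → F =>
        ∀ i, S' + ∑ j, a j * (x i) ^ ((j : ℕ) + 1) = y i).card := by
  have shares_eq_iff (s : F) (a : Fin (c' - 1) → F) :
      (∀ i, s + ∑ j, a j * (x i) ^ ((j : ℕ) + 1) = y i) ↔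
        sharesOfZero (c' - 1) x a = y - fun _ => s := by
    simp only [funext_iff, eq_sub_iff_add_eq']
    rfl
  simp only [shares_eq_iff]
  have hsurj := sharesOfZero_surjective ht hx hx0
  exact AddMonoidHom.card_fiber_eq_of_mem_range (sharesOfZero (c' - 1) x) (hsurj _) (hsurj _)

open scoped Classical in
theorem stmt3 {F : Type*} [Field F] [Fintype F] (c' : ℕ) (hc : 2 ≤ c')
    (t : ℕ) (ht : t ≤ c' - 1) (x : Fin t → F)
    (hx : Function.Injective x) (hx0 : ∀ i, x i ≠ 0) (S S' : F) (y : Fin t → F) :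
    (Finset.univ.filter fun a : Fin (c' - 1) → F =>
        ∀ i, S + ∑ j, a j * (x i) ^ ((j : ℕ) + 1) = y i).card =
    (Finset.univ.filter fun a : Fin (c' - 1) → F =>
        ∀ i, S' + ∑ j, a j * (x i) ^ ((j : ℕ) + 1) = y i).card :=
  stmt3_general c' t ht x hx hx0 S S' y
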